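/- Let φ = (1+√5)/2 and V(x,y,z) = (φ²x² − y²)(φ²y² − z²)(φ²z² − x²). Then for every (x,y,z) ∈ ℝ³ with x² + y² + z² = 1, one has V(x,y,z) ≥ −(2+√5)/5. In particular, for ξ < −(2+√5)/5 the intersection of the unit sphere with the surface V = ξ is empty. -/
import Mathlib


/-- The golden ratio. -/
noncomputable def φ : ℝ := (1 + Real.sqrt 5) / 2

/-- The degree-6 invariant of the icosahedral group. -/
noncomputable def V (x y z : ℝ) : ℝ :=
  (φ ^ 2 * x ^ 2 - y ^ 2) * (φ ^ 2 * y ^ 2 - z ^ 2) * (φ ^ 2 * z ^ 2 - x ^ 2)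

lemma phi_sq : φ ^ 2 = φ + 1 := by
  have h5 : Real.sqrt 5 ^ 2 = 5 := Real.sq_sqrt (by norm_num)
  unfold φ
  nlinarith [h5]

lemma phi_lb : (1 : ℝ) < φ := by
  have h5 : (2 : ℝ) < Real.sqrt 5 := by
    nlinarith [Real.sq_sqrt (show (0:ℝ) ≤ 5 by norm_num),
      Real.sqrt_nonneg 5]
  unfold φ; linarith

lemma key_identity (x y z : ℝ) :
    5 * V x y z + (1 + 2 * φ) * (x ^ 2 + y ^ 2 + z ^ 2) ^ 3 =
    (1 + 2 * φ) * (x ^ 2 * (x ^ 2 - (1 + φ) * y ^ 2 - (2 - φ) * z ^ 2) ^ 2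
      + y ^ 2 * (y ^ 2 - (1 + φ) * z ^ 2 - (2 - φ) * x ^ 2) ^ 2
      + z ^ 2 * (z ^ 2 - (1 + φ) * x ^ 2 - (2 - φ) * y ^ 2) ^ 2
      + 20 * x ^ 2 * y ^ 2 * z ^ 2) := by
  have hφ : φ ^ 2 = φ + 1 := phi_sq
  unfold V
  linear_combination (- 6*y^2*z^4 - 2*y^2*z^4*φ - y^4*z^2 - 7*y^4*z^2*φ - 5*y^4*z^2*φ^2
    - x^2*z^4 - 7*x^2*z^4*φ - 5*x^2*z^4*φ^2
    + 31*x^2*y^2*z^2 + 27*x^2*y^2*z^2*φ + 10*x^2*y^2*z^2*φ^2 + 5*x^2*y^2*z^2*φ^3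
    + 5*x^2*y^2*z^2*φ^4
    - 6*x^2*y^4 - 2*x^2*y^4*φ - 6*x^4*z^2 - 2*x^4*z^2*φ
    - x^4*y^2 - 7*x^4*y^2*φ - 5*x^4*y^2*φ^2) * hφ

lemma phi_cube : 1 + 2 * φ = 2 + Real.sqrt 5 := by unfold φ; ring

lemma main_ineq (x y z : ℝ) (h : x ^ 2 + y ^ 2 + z ^ 2 = 1) :
    V x y z ≥ -((2 + Real.sqrt 5) / 5) := by
  have hid := key_identity x y z
  rw [h] at hid
  have hpos : (0 : ℝ) < 1 + 2 * φ := by have := phi_lb; linarith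
  have hrhs : (0 : ℝ) ≤ x ^ 2 * (x ^ 2 - (1 + φ) * y ^ 2 - (2 - φ) * z ^ 2) ^ 2
      + y ^ 2 * (y ^ 2 - (1 + φ) * z ^ 2 - (2 - φ) * x ^ 2) ^ 2
      + z ^ 2 * (z ^ 2 - (1 + φ) * x ^ 2 - (2 - φ) * y ^ 2) ^ 2
      + 20 * x ^ 2 * y ^ 2 * z ^ 2 := by positivity
  have h1 : 5 * V x y z + (1 + 2 * φ) ≥ 0 := by nlinarith
  rw [phi_cube] at h1
  linarith

/-- On the unit sphere, `V ≥ −(2+√5)/5`; in particular, for `ξ < −(2+√5)/5` the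
intersection of the unit sphere with the surface `V = ξ` is empty. -/
theorem stmt6 :
    (∀ x y z : ℝ, x ^ 2 + y ^ 2 + z ^ 2 = 1 → V x y z ≥ -((2 + Real.sqrt 5) / 5)) ∧
    (∀ ξ : ℝ, ξ < -((2 + Real.sqrt 5) / 5) →
      {p : ℝ × ℝ × ℝ | p.1 ^ 2 + p.2.1 ^ 2 + p.2.2 ^ 2 = 1 ∧ V p.1 p.2.1 p.2.2 = ξ} = ∅) := by
  refine ⟨main_ineq, fun ξ hξ => ?_⟩
  ext ⟨x, y, z⟩
  simp only [Set.mem_setOf_eq, Set.mem_empty_iff_false, iff_false, not_and]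
  intro hs hV
  have := main_ineq x y z hs
  rw [hV] at this
  linarith
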